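/- Let n ≤ m, let B be an anti-symmetric quiver matrix on m vertex pairs, and let i : Fin n (viewed inside Fin m via the canonical embedding, so that the first n pairs are the mutable ones). Suppose there is no path through Sum.inl i. Let B̄ and B̄' denote the m × n shortened exchange matrices of B and of B' := μ_{Sum.inr i}(μ_{Sum.inl i}(B)) respectively, i.e. B̄ j k = B (Sum.inl j) (Sum.inl k) + B (Sum.inr j) (Sum.inl k) for j : Fin m and k : Fin n viewed in Fin m. Then the matrices obtained from B̄ and B̄' by casting entries into ℚ have equal rank. -/

import Mathlib

/-- Matrix mutation at an index `v`. -/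
def mutate {ι : Type*} [DecidableEq ι] (B : Matrix ι ι ℤ) (v : ι) : Matrix ι ι ℤ :=
  Matrix.of fun x y =>
    if x = v ∨ y = v then -B x y
    else B x y + (B x v).sign * max (B x v * B v y) 0

/-- Anti-symmetric quiver matrix on `n` vertex pairs. -/
def IsAntiSymQuiver {n : ℕ} (B : Matrix (Fin n ⊕ Fin n) (Fin n ⊕ Fin n) ℤ) : Prop :=
  (∀ x y, B x y = - B y x) ∧
  (∀ x y, B x y = B (Sum.swap y) (Sum.swap x)) ∧
  (∀ x, B x (Sum.swap x) = 0)

/-- The (square) shortened exchange matrix. -/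
def sbar {n : ℕ} (B : Matrix (Fin n ⊕ Fin n) (Fin n ⊕ Fin n) ℤ) : Fin n → Fin n → ℤ :=
  fun j k => B (Sum.inl j) (Sum.inl k) + B (Sum.inr j) (Sum.inl k)

/-- No path through the vertex `Sum.inl i`. -/
def NoPathThrough {n : ℕ} (B : Matrix (Fin n ⊕ Fin n) (Fin n ⊕ Fin n) ℤ) (i : Fin n) : Prop :=
  ∀ x, ¬ (0 < B x (Sum.inl i) ∧ 0 < B (Sum.inl i) (Sum.swap x))

/-- The `m × n` shortened exchange matrix, where the first `n` vertex pairs are mutable. -/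
def sbarRect {m n : ℕ} (h : n ≤ m) (B : Matrix (Fin m ⊕ Fin m) (Fin m ⊕ Fin m) ℤ) :
    Matrix (Fin m) (Fin n) ℤ :=
  Matrix.of fun j k =>
    B (Sum.inl j) (Sum.inl (Fin.castLE h k)) + B (Sum.inr j) (Sum.inl (Fin.castLE h k))

/-!
Write `v = inl p`, `w = inr p` and `B̄` for the shortened exchange matrix. Mutating at `v` and
then at `w` merely negates the rows of `v`, `w` and the column of `v`, so these entries of `B̄'` are
`-B̄`. At every other entry the two mutations add four terms `sign(a) [a c]₊`, and since "no path
through `v`" says exactly that `B x v * B x w ≤ 0`, they add up to `(a - b)₊ (c - d) + (a - b)(c₋ - d₋)`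
with `a - b = B̄ j p` and `c - d = B̄ p k`. Hence `B̄' = B̄ + u (row p of B̄) + (column p of B̄) zᵀ`
with `u p = z p = -2`, i.e. `B̄' = (1 + u e_pᵀ) B̄ (1 + e_p zᵀ)`, and both factors are invertible
by the matrix determinant lemma.
-/

theorem Int.sign_mul_max_mul_zero (x y : ℤ) :
    x.sign * max (x * y) 0 = max x 0 * y + x * max (-y) 0 := by
  rcases lt_trichotomy x 0 with hx | rfl | hx
  · rw [Int.sign_eq_neg_one_of_neg hx, max_eq_right hx.le]
    rcases le_or_gt y 0 with hy | hy
    · rw [max_eq_left (mul_nonneg_of_nonpos_of_nonpos hx.le hy), max_eq_left (neg_nonneg.2 hy)]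
      ring
    · rw [max_eq_right (mul_nonpos_of_nonpos_of_nonneg hx.le hy.le),
        max_eq_right (neg_nonpos.2 hy.le)]
      ring
  · simp
  · rw [Int.sign_eq_one_of_pos hx, max_eq_left hx.le]
    rcases le_or_gt y 0 with hy | hy
    · rw [max_eq_right (mul_nonpos_of_nonneg_of_nonpos hx.le hy), max_eq_left (neg_nonneg.2 hy)]
      ring
    · rw [max_eq_left (mul_nonneg hx.le hy.le), max_eq_right (neg_nonpos.2 hy.le)]
      ring

theorem Int.sum_sign_mul_max_of_mul_nonpos {a b : ℤ} (hab : a * b ≤ 0) (c d : ℤ) :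
    a.sign * max (a * c) 0 + b.sign * max (b * -d) 0 +
      (-b).sign * max (-b * c) 0 + (-a).sign * max (-a * -d) 0 =
    max (a - b) 0 * (c - d) + (a - b) * (max (-c) 0 - max (-d) 0) := by
  simp only [Int.sign_mul_max_mul_zero]
  have hpos : max a 0 + max (-b) 0 = max (a - b) 0 := by
    rcases mul_nonpos_iff.1 hab with h | h <;> omega
  have hneg : max b 0 + max (-a) 0 = max (a - b) 0 - (a - b) := by
    rcases mul_nonpos_iff.1 hab with h | h <;> omega
  have hd : max (- -d) 0 = d + max (-d) 0 := by omega
  rw [hd]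
  linear_combination c * hpos - d * hneg

namespace Matrix

variable {m n K : Type*} [Fintype m] [Fintype n] [DecidableEq m] [DecidableEq n] [Field K]

theorem isUnit_det_one_add_vecMulVec_single {u : m → K} {i : m} (hu : u i ≠ -1) :
    IsUnit (1 + vecMulVec u (Pi.single i 1)).det := by
  rw [vecMulVec_eq Unit, det_one_add_replicateCol_mul_replicateRow, single_one_dotProduct,
    isUnit_iff_ne_zero]
  exact fun h => hu (eq_neg_of_add_eq_zero_right h)

theorem isUnit_det_one_add_single_vecMulVec {z : n → K} {k : n} (hz : z k ≠ -1) :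
    IsUnit (1 + vecMulVec (Pi.single k 1) z).det := by
  rw [vecMulVec_eq Unit, det_one_add_replicateCol_mul_replicateRow, dotProduct_single_one,
    isUnit_iff_ne_zero]
  exact fun h => hz (eq_neg_of_add_eq_zero_right h)

theorem rank_add_vecMulVec_row_add_vecMulVec_col (A : Matrix m n K) {i : m} {k : n}
    (hA : A i k = 0) {u : m → K} {z : n → K} (hu : u i ≠ -1) (hz : z k ≠ -1) :
    (A + vecMulVec u (A.row i) + vecMulVec (A.col k) z).rank = A.rank := by
  have hEAF : A + vecMulVec u (A.row i) + vecMulVec (A.col k) z =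
      (1 + vecMulVec u (Pi.single i 1)) * A * (1 + vecMulVec (Pi.single k 1) z) := by
    ext j l
    simp [Matrix.add_mul, Matrix.mul_add, vecMulVec_mul, mul_vecMulVec, vecMulVec_apply, hA]
  rw [hEAF, rank_mul_eq_left_of_isUnit_det _ _ (isUnit_det_one_add_single_vecMulVec hz),
    rank_mul_eq_right_of_isUnit_det _ _ (isUnit_det_one_add_vecMulVec_single hu)]

end Matrix

section Mutation

variable {ι : Type*} [DecidableEq ι] {B : Matrix ι ι ℤ} {v w x y : ι}

theorem mutate_apply_of_ne (hx : x ≠ v) (hy : y ≠ v) :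
    mutate B v x y = B x y + (B x v).sign * max (B x v * B v y) 0 :=
  if_neg (not_or.2 ⟨hx, hy⟩)

theorem mutate_apply_left (B : Matrix ι ι ℤ) (v y : ι) : mutate B v v y = -B v y :=
  if_pos (Or.inl rfl)

theorem mutate_apply_right (B : Matrix ι ι ℤ) (v x : ι) : mutate B v x v = -B x v :=
  if_pos (Or.inr rfl)

theorem mutate_apply_of_apply_eq_zero_left (hx : x ≠ v) (hy : y ≠ v) (h : B x v = 0) :
    mutate B v x y = B x y := by
  simp [mutate_apply_of_ne hx hy, h]

theorem mutate_apply_of_apply_eq_zero_right (hx : x ≠ v) (hy : y ≠ v) (h : B v y = 0) :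
    mutate B v x y = B x y := by
  simp [mutate_apply_of_ne hx hy, h]

theorem mutate_mutate_apply_of_ne (hvw : v ≠ w) (hBvw : B v w = 0) (hBwv : B w v = 0)
    (hxv : x ≠ v) (hxw : x ≠ w) (hyv : y ≠ v) (hyw : y ≠ w) :
    mutate (mutate B v) w x y = B x y + (B x v).sign * max (B x v * B v y) 0
      + (B x w).sign * max (B x w * B w y) 0 := by
  rw [mutate_apply_of_ne hxw hyw, mutate_apply_of_ne hxv hyv,
    mutate_apply_of_apply_eq_zero_right hxv hvw.symm hBvw,
    mutate_apply_of_apply_eq_zero_left hvw.symm hyv hBwv]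

theorem mutate_mutate_apply_first_row (hvw : v ≠ w) (hBvw : B v w = 0) (hyw : y ≠ w) :
    mutate (mutate B v) w v y = -B v y := by
  rw [mutate_apply_of_apply_eq_zero_left hvw hyw (by rw [mutate_apply_left, hBvw, neg_zero]),
    mutate_apply_left]

theorem mutate_mutate_apply_second_row (hvw : v ≠ w) (hBwv : B w v = 0) (y : ι) :
    mutate (mutate B v) w w y = -B w y := by
  rw [mutate_apply_left, neg_inj]
  by_cases hyv : y = v
  · rw [hyv, mutate_apply_right, hBwv, neg_zero]
  · exact mutate_apply_of_apply_eq_zero_left hvw.symm hyv hBwv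

theorem mutate_mutate_apply_first_col (hvw : v ≠ w) (hBwv : B w v = 0) (hxw : x ≠ w) :
    mutate (mutate B v) w x v = -B x v := by
  rw [mutate_apply_of_apply_eq_zero_right hxw hvw (by rw [mutate_apply_right, hBwv, neg_zero]),
    mutate_apply_right]

end Mutation

namespace IsAntiSymQuiver

variable {m : ℕ} {B : Matrix (Fin m ⊕ Fin m) (Fin m ⊕ Fin m) ℤ}

theorem apply_self (hB : IsAntiSymQuiver B) (x : Fin m ⊕ Fin m) : B x x = 0 := by
  have := hB.1 x x
  omega

theorem inr_apply (hB : IsAntiSymQuiver B) (a : Fin m) (y : Fin m ⊕ Fin m) :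
    B (Sum.inr a) y = -B (Sum.inl a) y.swap := by
  rw [hB.2.1, ← hB.1]
  rfl

theorem inl_apply_inr_self (hB : IsAntiSymQuiver B) (a : Fin m) :
    B (Sum.inl a) (Sum.inr a) = 0 :=
  hB.2.2 (Sum.inl a)

theorem inr_apply_inl_self (hB : IsAntiSymQuiver B) (a : Fin m) :
    B (Sum.inr a) (Sum.inl a) = 0 := by
  rw [hB.inr_apply, Sum.swap_inl, hB.inl_apply_inr_self, neg_zero]

theorem sbar_self (hB : IsAntiSymQuiver B) (a : Fin m) : sbar B a a = 0 := by
  rw [sbar, hB.apply_self, hB.inr_apply_inl_self, add_zero]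

end IsAntiSymQuiver

theorem NoPathThrough.mul_nonpos {m : ℕ} {B : Matrix (Fin m ⊕ Fin m) (Fin m ⊕ Fin m) ℤ}
    (hB : IsAntiSymQuiver B) {p : Fin m} (hpath : NoPathThrough B p) (a : Fin m) :
    B (Sum.inl a) (Sum.inl p) * B (Sum.inl a) (Sum.inr p) ≤ 0 := by
  have hl := hpath (Sum.inl a)
  have hr := hpath (Sum.inr a)
  rw [Sum.swap_inl, hB.1 (Sum.inl p), hB.inr_apply, Sum.swap_inl, neg_neg] at hl
  rw [Sum.swap_inr, hB.1 (Sum.inl p), hB.inr_apply, Sum.swap_inl] at hr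
  by_contra! hpos
  rcases pos_and_pos_or_neg_and_neg_of_mul_pos hpos with h | h
  · exact hl h
  · exact hr ⟨neg_pos.2 h.2, neg_pos.2 h.1⟩

-- `-2` because the row and the column of `p` in `B̄'` are those of `B̄` negated.
def sbarLeftCoeff {m : ℕ} (B : Matrix (Fin m ⊕ Fin m) (Fin m ⊕ Fin m) ℤ) (p j : Fin m) : ℤ :=
  if j = p then -2 else max (sbar B j p) 0

def sbarRightCoeff {m : ℕ} (B : Matrix (Fin m ⊕ Fin m) (Fin m ⊕ Fin m) ℤ) (p k : Fin m) : ℤ :=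
  if k = p then -2 else max (-B (Sum.inl p) (Sum.inl k)) 0 - max (-B (Sum.inl p) (Sum.inr k)) 0

theorem sbar_mutate_mutate {m : ℕ} {B : Matrix (Fin m ⊕ Fin m) (Fin m ⊕ Fin m) ℤ}
    (hB : IsAntiSymQuiver B) {p : Fin m} (hpath : NoPathThrough B p)
    (j k : Fin m) :
    sbar (mutate (mutate B (Sum.inl p)) (Sum.inr p)) j k =
      sbar B j k + sbarLeftCoeff B p j * sbar B p k + sbar B j p * sbarRightCoeff B p k := by
  have hvw : (Sum.inl p : Fin m ⊕ Fin m) ≠ Sum.inr p := Sum.inl_ne_inr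
  have hBvw := hB.inl_apply_inr_self p
  have hBwv := hB.inr_apply_inl_self p
  by_cases hj : j = p
  · subst hj
    rw [sbar, mutate_mutate_apply_first_row hvw hBvw Sum.inl_ne_inr,
      mutate_mutate_apply_second_row hvw hBwv, sbarLeftCoeff, if_pos rfl, hB.sbar_self, sbar]
    ring
  have hjv : (Sum.inl j : Fin m ⊕ Fin m) ≠ Sum.inl p := by simpa using hj
  have hjw : (Sum.inr j : Fin m ⊕ Fin m) ≠ Sum.inr p := by simpa using hj
  by_cases hk : k = p
  · subst hk
    rw [sbar, mutate_mutate_apply_first_col hvw hBwv Sum.inl_ne_inr,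
      mutate_mutate_apply_first_col hvw hBwv hjw, sbarRightCoeff, if_pos rfl, hB.sbar_self, sbar]
    ring
  have hkv : (Sum.inl k : Fin m ⊕ Fin m) ≠ Sum.inl p := by simpa using hk
  have ht : sbar B j p = B (Sum.inl j) (Sum.inl p) - B (Sum.inl j) (Sum.inr p) := by
    rw [sbar, hB.inr_apply, Sum.swap_inl, sub_eq_add_neg]
  have hs : sbar B p k = B (Sum.inl p) (Sum.inl k) - B (Sum.inl p) (Sum.inr k) := by
    rw [sbar, hB.inr_apply, Sum.swap_inl, sub_eq_add_neg]
  rw [sbarLeftCoeff, if_neg hj, sbarRightCoeff, if_neg hk, ht, hs, sbar, sbar,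
    mutate_mutate_apply_of_ne hvw hBvw hBwv hjv Sum.inl_ne_inr hkv Sum.inl_ne_inr,
    mutate_mutate_apply_of_ne hvw hBvw hBwv Sum.inr_ne_inl hjw hkv Sum.inl_ne_inr]
  simp only [hB.inr_apply, Sum.swap_inl, Sum.swap_inr]
  linear_combination Int.sum_sign_mul_max_of_mul_nonpos (hpath.mul_nonpos hB j)
    (B (Sum.inl p) (Sum.inl k)) (B (Sum.inl p) (Sum.inr k))

theorem sbarRect_apply {m n : ℕ} (h : n ≤ m) (B : Matrix (Fin m ⊕ Fin m) (Fin m ⊕ Fin m) ℤ)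
    (j : Fin m) (k : Fin n) : sbarRect h B j k = sbar B j (Fin.castLE h k) :=
  rfl

theorem stmt2 {m n : ℕ} (h : n ≤ m) (B : Matrix (Fin m ⊕ Fin m) (Fin m ⊕ Fin m) ℤ)
    (hB : IsAntiSymQuiver B) (i : Fin n)
    (hpath : NoPathThrough B (Fin.castLE h i)) :
    ((sbarRect h B).map (Int.cast : ℤ → ℚ)).rank =
      ((sbarRect h
          (mutate (mutate B (Sum.inl (Fin.castLE h i))) (Sum.inr (Fin.castLE h i)))).map
        (Int.cast : ℤ → ℚ)).rank := by
  set p := Fin.castLE h i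
  set A := (sbarRect h B).map (Int.cast : ℤ → ℚ)
  have hmut : (sbarRect h (mutate (mutate B (Sum.inl p)) (Sum.inr p))).map (Int.cast : ℤ → ℚ) =
      A + Matrix.vecMulVec (fun j => (sbarLeftCoeff B p j : ℚ)) (A.row p) +
        Matrix.vecMulVec (A.col i) (fun k => (sbarRightCoeff B p (Fin.castLE h k) : ℚ)) := by
    ext j k
    simp [A, p, sbarRect_apply, sbar_mutate_mutate hB hpath, Matrix.vecMulVec_apply]
  have hAp : A p i = 0 := by simp [A, sbarRect_apply, p, hB.sbar_self]
  rw [hmut, Matrix.rank_add_vecMulVec_row_add_vecMulVec_col A hAp] <;>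
    norm_num [sbarLeftCoeff, sbarRightCoeff, p]
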